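/- Let r₀ > 0 and γ > 0 satisfy r₀·γ ≥ 1, and define h : [r₀, ∞) → ℝ by h(x) := 2x(√x − √r₀) / (2√r₀·(γx − 1) + √x). Then: (i) the denominator 2√r₀·(γx − 1) + √x is strictly positive for every x ≥ r₀; (ii) h(r₀) = 0 and h(x) > 0 for x > r₀; (iii) h is strictly increasing on [r₀, ∞); (iv) h(x) → ∞ as x → ∞; and (v) h(x)/(x − r₀) → 1/(2γr₀ − 1) as x ↓ r₀, and this limit is ≤ 1 (strictly less than 1 when r₀·γ > 1). -/

import Mathlib

/-!
In the variable `t = √x`, with `s = √r₀`, the function `h` becomes the rational function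
`φ(t) = 2t²(t - s) / (2s(γt² - 1) + t)`. Cross-multiplying, `φ(u) < φ(v)` for `s ≤ u < v` reduces
to the positivity of a polynomial `B(u, v)`; since `s²γ ≥ 1`, `s · B(s + a, s + b)` dominates a
polynomial in `s, a, b ≥ 0` with nonnegative coefficients and constant term `s⁴`. For large `t`,
`φ(t) ≥ t / (2sγ + 1)`, and near `t = s` the factor `t - s` cancels against `x - r₀ = t² - s²`,
which gives the initial slope.
-/

open Filter Topology Set

noncomputable def jumpRatio (s γ t : ℝ) : ℝ := 2 * t ^ 2 * (t - s) / (2 * s * (γ * t ^ 2 - 1) + t)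

section

variable {s γ : ℝ}

theorem pos_of_one_le_sq_mul (hsγ : 1 ≤ s ^ 2 * γ) : 0 < γ :=
  pos_of_mul_pos_right (one_pos.trans_le hsγ) (sq_nonneg s)

theorem jumpRatio_denom_pos (hs : 0 < s) (hsγ : 1 ≤ s ^ 2 * γ) {t : ℝ} (ht : s ≤ t) :
    0 < 2 * s * (γ * t ^ 2 - 1) + t := by
  have hγt : 1 ≤ γ * t ^ 2 := by
    calc 1 ≤ s ^ 2 * γ := hsγ
      _ ≤ γ * t ^ 2 := by
        rw [mul_comm]
        exact mul_le_mul_of_nonneg_left (pow_le_pow_left₀ hs.le ht 2)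
          (pos_of_one_le_sq_mul hsγ).le
  have : 0 ≤ 2 * s * (γ * t ^ 2 - 1) := mul_nonneg (by positivity) (sub_nonneg.2 hγt)
  linarith

theorem jumpRatio_self : jumpRatio s γ s = 0 := by
  simp [jumpRatio]

theorem jumpRatio_pos (hs : 0 < s) (hsγ : 1 ≤ s ^ 2 * γ) {t : ℝ} (ht : s < t) :
    0 < jumpRatio s γ t :=
  div_pos (by have := hs.trans ht; have := sub_pos.2 ht; positivity)
    (jumpRatio_denom_pos hs hsγ ht.le)

theorem jumpRatio_cross_term_pos (hs : 0 < s) (hsγ : 1 ≤ s ^ 2 * γ) {u v : ℝ}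
    (hu : s ≤ u) (hv : s ≤ v) :
    0 < 2 * s * γ * (u ^ 2 * v ^ 2) + u * v * (u + v - s) - 2 * s * (u ^ 2 + u * v + v ^ 2)
      + 2 * s ^ 2 * (u + v) := by
  obtain ⟨a, ha, rfl⟩ : ∃ a, 0 ≤ a ∧ u = s + a := ⟨u - s, sub_nonneg.2 hu, by ring⟩
  obtain ⟨b, hb, rfl⟩ : ∃ b, 0 ≤ b ∧ v = s + b := ⟨v - s, sub_nonneg.2 hv, by ring⟩
  refine pos_of_mul_pos_right ?_ hs.le
  have hexpand : s * (2 * s * γ * ((s + a) ^ 2 * (s + b) ^ 2)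
      + (s + a) * (s + b) * (s + a + (s + b) - s)
      - 2 * s * ((s + a) ^ 2 + (s + a) * (s + b) + (s + b) ^ 2) + 2 * s ^ 2 * (s + a + (s + b)))
      = s ^ 4 + 2 * s ^ 3 * (a + b) + s ^ 2 * (a ^ 2 + 9 * a * b + b ^ 2)
        + 5 * s * a * b * (a + b) + 2 * a ^ 2 * b ^ 2
        + 2 * (s ^ 2 * γ - 1) * ((s + a) ^ 2 * (s + b) ^ 2) := by ring
  rw [hexpand]
  have := sub_nonneg.2 hsγ
  positivity

theorem jumpRatio_strictMonoOn (hs : 0 < s) (hsγ : 1 ≤ s ^ 2 * γ) :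
    StrictMonoOn (jumpRatio s γ) (Ici s) := by
  intro u hu v hv huv
  rw [jumpRatio, jumpRatio, div_lt_div_iff₀ (jumpRatio_denom_pos hs hsγ hu)
    (jumpRatio_denom_pos hs hsγ hv), ← sub_pos]
  convert mul_pos (mul_pos two_pos (sub_pos.2 huv)) (jumpRatio_cross_term_pos hs hsγ hu hv)
    using 1
  ring

theorem le_jumpRatio (hs : 0 < s) (hsγ : 1 ≤ s ^ 2 * γ) {t : ℝ} (h2s : 2 * s ≤ t)
    (h1 : 1 ≤ t) :
    t / (2 * s * γ + 1) ≤ jumpRatio s γ t := by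
  have hγ := pos_of_one_le_sq_mul hsγ
  have hst : s ≤ t := by linarith
  rw [jumpRatio, div_le_div_iff₀ (by positivity) (jumpRatio_denom_pos hs hsγ hst)]
  have ht2 : t ^ 2 ≤ t ^ 3 := pow_le_pow_right₀ h1 (by norm_num)
  have h2st : 0 ≤ t - 2 * s := by linarith
  nlinarith [mul_nonneg (mul_nonneg hs.le hγ.le) (mul_nonneg h2st (sq_nonneg t))]

theorem tendsto_jumpRatio_atTop (hs : 0 < s) (hsγ : 1 ≤ s ^ 2 * γ) :
    Tendsto (jumpRatio s γ) atTop atTop := by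
  have hc : 0 < 2 * s * γ + 1 := by have := pos_of_one_le_sq_mul hsγ; positivity
  refine tendsto_atTop_mono' _ ?_ (tendsto_id.atTop_div_const hc)
  filter_upwards [eventually_ge_atTop (2 * s), eventually_ge_atTop 1] with t h2s h1
  exact le_jumpRatio hs hsγ h2s h1

theorem tendsto_jumpRatio_div_sq_sub_sq (hs : 0 < s) (hsγ : 1 ≤ s ^ 2 * γ) :
    Tendsto (fun t => jumpRatio s γ t / (t ^ 2 - s ^ 2)) (𝓝[>] s)
      (𝓝 (1 / (2 * γ * s ^ 2 - 1))) := by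
  set g : ℝ → ℝ := fun t => 2 * t ^ 2 / ((t + s) * (2 * s * (γ * t ^ 2 - 1) + t))
  have hg : ContinuousAt g s :=
    (by fun_prop : Continuous fun t : ℝ => 2 * t ^ 2).continuousAt.div (by fun_prop)
      (mul_pos (by linarith) (jumpRatio_denom_pos hs hsγ le_rfl)).ne'
  have hgs : g s = 1 / (2 * γ * s ^ 2 - 1) := by
    have : 2 * γ * s ^ 2 - 1 ≠ 0 := by linarith
    simp only [g]
    field_simp
    ring
  have hcancel : EqOn g (fun t => jumpRatio s γ t / (t ^ 2 - s ^ 2)) (Ioi s) := by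
    intro t ht
    have hts : t - s ≠ 0 := sub_ne_zero.2 (ne_of_gt ht)
    have hD := jumpRatio_denom_pos hs hsγ (le_of_lt ht)
    have : t + s ≠ 0 := by linarith [hs.trans ht.out]
    simp only [g, jumpRatio]
    rw [show t ^ 2 - s ^ 2 = (t - s) * (t + s) by ring]
    field_simp
  rw [← hgs]
  exact (hg.tendsto.mono_left nhdsWithin_le_nhds).congr'
    (eventuallyEq_nhdsWithin_of_eqOn hcancel)

end

theorem one_jump_h_properties_general (r₀ γ : ℝ) (hr₀ : 0 < r₀)
    (hrγ : 1 ≤ r₀ * γ) (h : ℝ → ℝ)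
    (hh : ∀ x, h x = 2 * x * (Real.sqrt x - Real.sqrt r₀) /
        (2 * Real.sqrt r₀ * (γ * x - 1) + Real.sqrt x)) :
    (∀ x : ℝ, r₀ ≤ x → 0 < 2 * Real.sqrt r₀ * (γ * x - 1) + Real.sqrt x) ∧
    (h r₀ = 0 ∧ ∀ x : ℝ, r₀ < x → 0 < h x) ∧
    StrictMonoOn h (Set.Ici r₀) ∧
    Filter.Tendsto h Filter.atTop Filter.atTop ∧
    (Filter.Tendsto (fun x => h x / (x - r₀)) (nhdsWithin r₀ (Set.Ioi r₀))
        (nhds (1 / (2 * γ * r₀ - 1))) ∧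
      1 / (2 * γ * r₀ - 1) ≤ 1 ∧
      (1 < r₀ * γ → 1 / (2 * γ * r₀ - 1) < 1)) := by
  set s := √r₀
  have hs : 0 < s := Real.sqrt_pos.2 hr₀
  have hs2 : s ^ 2 = r₀ := Real.sq_sqrt hr₀.le
  have hsγ : 1 ≤ s ^ 2 * γ := hs2 ▸ hrγ
  have hh' : ∀ x, 0 ≤ x → h x = jumpRatio s γ √x := fun x hx => by
    rw [hh, jumpRatio, Real.sq_sqrt hx]
  have hx0 : ∀ x, r₀ ≤ x → 0 ≤ x := fun x hx => hr₀.le.trans hx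
  have hone : 1 ≤ 2 * γ * r₀ - 1 := by linarith
  refine ⟨fun x hx => ?_, ⟨?_, fun x hx => ?_⟩, fun x hx y hy hxy => ?_, ?_, ?_,
    (div_le_one (by linarith)).2 hone, fun hlt => (div_lt_one (by linarith)).2 (by linarith)⟩
  · simpa [Real.sq_sqrt (hx0 x hx)] using jumpRatio_denom_pos hs hsγ (Real.sqrt_le_sqrt hx)
  · rw [hh' r₀ hr₀.le, jumpRatio_self]
  · rw [hh' x (hx0 x hx.le)]
    exact jumpRatio_pos hs hsγ (Real.sqrt_lt_sqrt hr₀.le hx)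
  · rw [hh' x (hx0 x hx), hh' y (hx0 y hy)]
    exact jumpRatio_strictMonoOn hs hsγ (Real.sqrt_le_sqrt hx) (Real.sqrt_le_sqrt hy)
      (Real.sqrt_lt_sqrt (hx0 x hx) hxy)
  · refine ((tendsto_jumpRatio_atTop hs hsγ).comp Real.tendsto_sqrt_atTop).congr' ?_
    filter_upwards [eventually_ge_atTop 0] with x hx
    exact (hh' x hx).symm
  · have hsqrt : Tendsto Real.sqrt (𝓝[>] r₀) (𝓝[>] s) :=
      tendsto_nhdsWithin_iff.2 ⟨Real.continuous_sqrt.continuousWithinAt.tendsto,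
        eventually_nhdsWithin_of_forall fun x hx => Real.sqrt_lt_sqrt hr₀.le hx⟩
    have hlim := (tendsto_jumpRatio_div_sq_sub_sq hs hsγ).comp hsqrt
    rw [hs2] at hlim
    refine hlim.congr' ?_
    filter_upwards [self_mem_nhdsWithin] with x hx
    simp [hh' x (hx0 x hx.le), Real.sq_sqrt (hx0 x hx.le)]

/-- Properties of `h(x) = 2x(√x − √r₀)/(2√r₀(γx − 1) + √x)` on `[r₀, ∞)` when
`r₀ > 0`, `γ > 0` and `r₀γ ≥ 1`: the denominator is positive, `h(r₀) = 0` and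
`h > 0` past `r₀`, `h` is strictly increasing, `h(x) → ∞` as `x → ∞`, and the
initial slope `h(x)/(x − r₀) → 1/(2γr₀ − 1) ≤ 1` as `x ↓ r₀` (with strict
inequality when `r₀γ > 1`). -/
theorem one_jump_h_properties (r₀ γ : ℝ) (hr₀ : 0 < r₀) (hγ : 0 < γ)
    (hrγ : 1 ≤ r₀ * γ) (h : ℝ → ℝ)
    (hh : ∀ x, h x = 2 * x * (Real.sqrt x - Real.sqrt r₀) /
        (2 * Real.sqrt r₀ * (γ * x - 1) + Real.sqrt x)) :
    (∀ x : ℝ, r₀ ≤ x → 0 < 2 * Real.sqrt r₀ * (γ * x - 1) + Real.sqrt x) ∧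
    (h r₀ = 0 ∧ ∀ x : ℝ, r₀ < x → 0 < h x) ∧
    StrictMonoOn h (Set.Ici r₀) ∧
    Filter.Tendsto h Filter.atTop Filter.atTop ∧
    (Filter.Tendsto (fun x => h x / (x - r₀)) (nhdsWithin r₀ (Set.Ioi r₀))
        (nhds (1 / (2 * γ * r₀ - 1))) ∧
      1 / (2 * γ * r₀ - 1) ≤ 1 ∧
      (1 < r₀ * γ → 1 / (2 * γ * r₀ - 1) < 1)) :=
  one_jump_h_properties_general r₀ γ hr₀ hrγ h hh
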